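/- Fix 0 < ε < 1. For each integer n ≥ 2, let F_n be a measurable set in a probability space with P(F_n) = 1/(2n^2), and set f_n = (n / ln^2 n) · 1_{F_n} and λ_n = 1 / (n · ln^{1+ε/2} n). Then for all sufficiently large n, E( (f_n/λ_n) · ln^{1-ε}(1 + f_n/λ_n) ) ≤ 1; consequently, the Luxemburg norms of f_n in the Orlicz space generated by g(x) = x ln^{1-ε}(1+x) satisfy ||f_n||_g ≤ 1/(n ln^{1+ε/2} n) for all sufficiently large n, and Σ_{n≥2} ||f_n||_g < ∞. -/

import Mathlib

/-!
On `F_n` the ratio `f_n / λ_n` equals `a_n = n² ln^{ε/2-1} n ≤ n²`, so `ln (1 + a_n) ≤ 3 ln n`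
and `E g(f_n/λ_n) = a_n ln^{1-ε}(1 + a_n) / (2n²) ≤ (3/2) ln^{-ε/2} n`, which tends to `0`.
Hence `λ_n` is admissible in the infimum defining `‖f_n‖_g` for large `n`, and `Σ λ_n` is a
Bertrand series `Σ 1/(n ln^p n)` with `p = 1 + ε/2 > 1`, summable by Cauchy condensation.
-/

open MeasureTheory ProbabilityTheory Filter
open scoped ENNReal NNReal Topology

/-- The Luxemburg norm of a nonnegative function `f` in the Orlicz space generated
by a convex function `g`, with respect to the measure `P`:
`‖f‖_g = inf { λ > 0 : E g(f/λ) ≤ 1 }`. -/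
noncomputable def luxemburgNorm {Ω : Type*} [MeasurableSpace Ω]
    (P : Measure Ω) (g : ℝ → ℝ) (f : Ω → ℝ) : ℝ :=
  sInf {l : ℝ | 0 < l ∧ ∫ ω, g (f ω / l) ∂P ≤ 1}

namespace Real

lemma summable_one_div_nat_mul_log_rpow {p : ℝ} (hp : 1 < p) :
    Summable fun n : ℕ => 1 / (n * log n ^ p) := by
  have h_condensed (k : ℕ) :
      (2 : ℝ) ^ k * (1 / (((2 ^ k : ℕ) : ℝ) * log ((2 ^ k : ℕ) : ℝ) ^ p))
        = ((k : ℝ) ^ p)⁻¹ * (log 2 ^ p)⁻¹ := by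
    push_cast
    rw [log_pow, mul_rpow (Nat.cast_nonneg k) (log_nonneg one_le_two), ← mul_inv]
    field_simp
  rw [← summable_condensed_iff_of_eventually_nonneg (.of_forall fun n => by positivity)]
  · simp_rw [h_condensed]
    exact (summable_nat_rpow_inv.2 hp).mul_right _
  -- `n = 1` gives the junk value `1 / 0 = 0`, so the sequence is only eventually antitone.
  · filter_upwards [eventually_ge_atTop 2] with k hk
    have : 0 < log k := log_pos (by exact_mod_cast hk)
    gcongr <;> exact k.le_succ

lemma log_one_add_sq_le {x : ℝ} (hx : 2 ≤ x) : log (1 + x ^ 2) ≤ 3 * log x := by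
  calc log (1 + x ^ 2) ≤ log (x ^ 3) := log_le_log (by positivity) (by nlinarith)
    _ = 3 * log x := by rw [log_pow]; norm_num

lemma div_one_div_mul_log_rpow {x : ℝ} (ε : ℝ) (hx : 0 < x) (hL : 0 < log x) :
    x / log x ^ 2 / (1 / (x * log x ^ ((1 : ℝ) + ε / 2))) = x ^ 2 * log x ^ (ε / 2 - 1) := by
  have hsplit : log x ^ ((1 : ℝ) + ε / 2) = log x ^ (ε / 2 - 1) * log x ^ 2 := by
    rw [← rpow_natCast, ← rpow_add hL]
    congr 1
    push_cast
    ring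
  rw [hsplit]
  field_simp

lemma one_div_two_sq_mul_mul_log_one_add_rpow_le {x ε : ℝ} (hε0 : 0 ≤ ε) (hε1 : ε ≤ 1)
    (hx : 2 ≤ x) (hL : 1 ≤ log x) :
    1 / (2 * x ^ 2) * (x ^ 2 * log x ^ (ε / 2 - 1) *
        log (1 + x ^ 2 * log x ^ (ε / 2 - 1)) ^ (1 - ε))
      ≤ 3 / 2 * log x ^ (-(ε / 2)) := by
  set L := log x
  set a := x ^ 2 * L ^ (ε / 2 - 1)
  have hL0 : 0 < L := by linarith
  have ha0 : 0 ≤ a := by positivity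
  have hax : a ≤ x ^ 2 :=
    mul_le_of_le_one_right (by positivity) (rpow_le_one_of_one_le_of_nonpos hL (by linarith))
  have hlog : log (1 + a) ≤ 3 * L :=
    (log_le_log (by positivity) (by linarith)).trans (log_one_add_sq_le hx)
  have hlog_rpow : log (1 + a) ^ (1 - ε) ≤ 3 * L ^ (1 - ε) := calc
    log (1 + a) ^ (1 - ε) ≤ (3 * L) ^ (1 - ε) :=
      rpow_le_rpow (log_nonneg (by linarith)) hlog (by linarith)
    _ = 3 ^ (1 - ε) * L ^ (1 - ε) := mul_rpow (by norm_num) hL0.le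
    _ ≤ 3 * L ^ (1 - ε) := by
      gcongr
      exact rpow_le_self_of_one_le (by norm_num) (by linarith)
  calc 1 / (2 * x ^ 2) * (a * log (1 + a) ^ (1 - ε))
      ≤ 1 / (2 * x ^ 2) * (a * (3 * L ^ (1 - ε))) := by gcongr
    _ = 3 / 2 * (L ^ (ε / 2 - 1) * L ^ (1 - ε)) := by
      have : x ≠ 0 := by positivity
      simp only [a]
      field_simp
    _ = 3 / 2 * L ^ (-(ε / 2)) := by rw [← rpow_add hL0]; ring_nf

end Real

section Luxemburg

variable {Ω : Type*} [MeasurableSpace Ω] (P : Measure Ω) (g : ℝ → ℝ) (f : Ω → ℝ)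

lemma luxemburgNorm_nonneg : 0 ≤ luxemburgNorm P g f :=
  Real.sInf_nonneg fun _ hl => hl.1.le

lemma luxemburgNorm_le {l : ℝ} (hl : 0 < l) (h : ∫ ω, g (f ω / l) ∂P ≤ 1) :
    luxemburgNorm P g f ≤ l :=
  csInf_le ⟨0, fun _ hx => hx.1.le⟩ ⟨hl, h⟩

end Luxemburg

lemma MeasureTheory.integral_comp_indicator_const {Ω : Type*} [MeasurableSpace Ω]
    (P : Measure Ω) {F : Set Ω} (hF : MeasurableSet F) (c : ℝ) {φ : ℝ → ℝ}
    (hφ : φ 0 = 0) :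
    ∫ ω, φ (F.indicator (fun _ => c) ω) ∂P = P.real F * φ c := by
  have hcomp : (fun ω => φ (F.indicator (fun _ => c) ω)) = F.indicator (fun _ => φ c) :=
    (Set.indicator_comp_of_zero hφ).symm
  rw [hcomp, integral_indicator_const _ hF, smul_eq_mul]

theorem orlicz_norm_estimate_nontight_example_general
    {Ω : Type*} [m0 : MeasurableSpace Ω] (P : Measure Ω)
    (ε : ℝ) (hε0 : 0 < ε) (hε1 : ε < 1)
    (g : ℝ → ℝ) (hg : ∀ x : ℝ, g x = x * Real.log (1 + x) ^ (1 - ε))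
    (Fset : ℕ → Set Ω) (hFmeas : ∀ n, MeasurableSet (Fset n))
    (hFP : ∀ n, 2 ≤ n → P (Fset n) = ENNReal.ofReal (1 / (2 * (n : ℝ) ^ 2)))
    (f : ℕ → Ω → ℝ)
    (hf : ∀ n, 2 ≤ n →
      f n = Set.indicator (Fset n) (fun _ => (n : ℝ) / (Real.log n) ^ 2))
    (lam : ℕ → ℝ)
    (hlam : ∀ n, lam n = 1 / ((n : ℝ) * Real.log n ^ ((1 : ℝ) + ε / 2))) :
    (∃ N : ℕ, ∀ n, N ≤ n →
      ∫ ω, (f n ω / lam n) * Real.log (1 + f n ω / lam n) ^ (1 - ε) ∂P ≤ 1) ∧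
    (∃ N : ℕ, ∀ n, N ≤ n →
      luxemburgNorm P g (f n) ≤ 1 / ((n : ℝ) * Real.log n ^ ((1 : ℝ) + ε / 2))) ∧
    Summable (fun n : ℕ => luxemburgNorm P g (f (n + 2))) := by
  have hlog : Tendsto (fun n : ℕ => Real.log n) atTop atTop :=
    Real.tendsto_log_atTop.comp tendsto_natCast_atTop_atTop
  have hlog_small : ∀ᶠ n : ℕ in atTop, Real.log n ^ (-(ε / 2)) < 2 / 3 :=
    ((tendsto_rpow_neg_atTop (by positivity)).comp hlog).eventually_lt_const (by norm_num)
  have hlarge : ∀ᶠ n : ℕ in atTop, 2 ≤ n ∧ 1 ≤ Real.log n :=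
    (eventually_ge_atTop 2).and (hlog.eventually_ge_atTop 1)
  have hlam_pos : ∀ᶠ n : ℕ in atTop, 0 < lam n := by
    filter_upwards [hlarge] with n ⟨hn, hL⟩
    rw [hlam]
    positivity
  have hmodular : ∀ᶠ n : ℕ in atTop,
      ∫ ω, (f n ω / lam n) * Real.log (1 + f n ω / lam n) ^ (1 - ε) ∂P ≤ 1 := by
    filter_upwards [hlarge, hlog_small] with n ⟨hn, hL⟩ hsmall
    have hnR : (2 : ℝ) ≤ n := by exact_mod_cast hn
    rw [hf n hn, integral_comp_indicator_const P (hFmeas n) _ (φ := fun x =>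
      x / lam n * Real.log (1 + x / lam n) ^ (1 - ε)) (by simp), measureReal_def, hFP n hn,
      ENNReal.toReal_ofReal (by positivity), hlam,
      Real.div_one_div_mul_log_rpow ε (by positivity) (by positivity)]
    linarith [Real.one_div_two_sq_mul_mul_log_one_add_rpow_le hε0.le hε1.le hnR hL]
  have hnorm : ∀ᶠ n : ℕ in atTop, luxemburgNorm P g (f n) ≤ lam n := by
    filter_upwards [hmodular, hlam_pos] with n hn hpos
    exact luxemburgNorm_le P g (f n) hpos (by simpa only [hg] using hn)
  refine ⟨eventually_atTop.1 hmodular,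
    eventually_atTop.1 (by simpa only [hlam] using hnorm), ?_⟩
  refine Summable.of_norm_bounded_eventually_nat (g := fun n => lam (n + 2)) ?_ ?_
  · simp_rw [hlam]
    exact (summable_nat_add_iff 2).2 (Real.summable_one_div_nat_mul_log_rpow (by linarith))
  · filter_upwards [(tendsto_add_atTop_nat 2).eventually hnorm] with n hn
    rwa [Real.norm_of_nonneg (luxemburgNorm_nonneg P g _)]

/-- **The Orlicz norm estimate in the construction of the non-tight example**
(Peligrad–Volný, proof of Lemma 5): with `P(F_n) = 1/(2n²)`,
`f_n = (n/ln² n) 1_{F_n}` and `λ_n = 1/(n ln^{1+ε/2} n)`, for all sufficiently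
large `n` one has `E((f_n/λ_n) ln^{1-ε}(1 + f_n/λ_n)) ≤ 1`; consequently the
Luxemburg norms in the Orlicz space generated by `g(x) = x ln^{1-ε}(1+x)` satisfy
`‖f_n‖_g ≤ 1/(n ln^{1+ε/2} n)` eventually, and `Σ_{n≥2} ‖f_n‖_g < ∞`. -/
theorem orlicz_norm_estimate_nontight_example
    {Ω : Type*} [m0 : MeasurableSpace Ω] (P : Measure Ω) [IsProbabilityMeasure P]
    (ε : ℝ) (hε0 : 0 < ε) (hε1 : ε < 1)
    (g : ℝ → ℝ) (hg : ∀ x : ℝ, g x = x * Real.log (1 + x) ^ (1 - ε))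
    (Fset : ℕ → Set Ω) (hFmeas : ∀ n, MeasurableSet (Fset n))
    (hFP : ∀ n, 2 ≤ n → P (Fset n) = ENNReal.ofReal (1 / (2 * (n : ℝ) ^ 2)))
    (f : ℕ → Ω → ℝ)
    (hf : ∀ n, 2 ≤ n →
      f n = Set.indicator (Fset n) (fun _ => (n : ℝ) / (Real.log n) ^ 2))
    (lam : ℕ → ℝ)
    (hlam : ∀ n, lam n = 1 / ((n : ℝ) * Real.log n ^ ((1 : ℝ) + ε / 2))) :
    (∃ N : ℕ, ∀ n, N ≤ n →
      ∫ ω, (f n ω / lam n) * Real.log (1 + f n ω / lam n) ^ (1 - ε) ∂P ≤ 1) ∧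
    (∃ N : ℕ, ∀ n, N ≤ n →
      luxemburgNorm P g (f n) ≤ 1 / ((n : ℝ) * Real.log n ^ ((1 : ℝ) + ε / 2))) ∧
    Summable (fun n : ℕ => luxemburgNorm P g (f (n + 2))) :=
  orlicz_norm_estimate_nontight_example_general (m0 := m0) P ε hε0 hε1 g hg Fset hFmeas hFP f hf lam
    hlam
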